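/- arXiv:1901.04463 — 4 statements merged into one kernel-verified Lean document; each statement's English description precedes it below -/
import Mathlib

section
/- Let Γ be a finite bipartite graph whose nontrivial connected components (those containing at least one edge) are C_1,…,C_ℓ, and suppose the sum over j of (|V(C_j)| - 1) is at most 2m for some m ≥ 2. Then the total number of edges of Γ is at most m(m+1), with the maximum m(m+1) attained only when ℓ = 1 and C_1 is isomorphic to the complete bipartite graph K_{m,m+1}. -/
/-!
Fix a proper 2-colouring. A nontrivial component `C` with `a` and `b` vertices of the two colours
and `n_C = a + b ≥ 2` vertices carries at most `a b` edges, so `4 |E| ≤ ∑ n_C²`. Merging two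
components keeps `∑ (n_C - 1)` and increases `∑ n_C²`, whence `∑ n_C² ≤ (1 + 2m)² = 4m(m+1) + 1`;
with at least two components the sharper bound `∑ n_C² ≤ (2m)² + 4` falls below `4m(m+1)` once
`m ≥ 2`. So in the extremal case there is one component, `a b = m(m+1)` with `a + b ≤ 2m + 1`
forces `{a, b} = {m, m + 1}`, and `|E| = a b` forces every bicoloured pair to be an edge.
-/

open Finset

theorem sq_add_sq_le_sq_add_sub_two_add_four {x y : ℕ} (hx : 2 ≤ x) (hy : 2 ≤ y) :
    x ^ 2 + y ^ 2 ≤ (x + y - 2) ^ 2 + 4 := by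
  obtain ⟨x, rfl⟩ := Nat.exists_eq_add_of_le hx
  obtain ⟨y, rfl⟩ := Nat.exists_eq_add_of_le hy
  rw [show 2 + x + (2 + y) - 2 = 2 + x + y by omega]
  nlinarith [Nat.zero_le (x * y)]

theorem sum_sq_le_sq_one_add_sum_sub_one {ι : Type*} {s : Finset ι} {n : ι → ℕ}
    (hn : ∀ i ∈ s, 2 ≤ n i) : ∑ i ∈ s, n i ^ 2 ≤ (1 + ∑ i ∈ s, (n i - 1)) ^ 2 := by
  classical
  induction s using Finset.induction_on with
  | empty => simp
  | insert i s hi ih =>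
    rw [sum_insert hi, sum_insert hi]
    have hni := hn i (mem_insert_self i s)
    have ih := ih fun j hj => hn j (mem_insert_of_mem hj)
    rcases s.eq_empty_or_nonempty with rfl | ⟨j, hj⟩
    · rw [sum_empty, sum_empty, add_zero, add_zero, Nat.add_sub_cancel' (by omega)]
    have hS : 1 ≤ ∑ j ∈ s, (n j - 1) :=
      (show 1 ≤ n j - 1 by have := hn j (mem_insert_of_mem hj); omega).trans
        (single_le_sum (f := fun k => n k - 1) (fun _ _ => Nat.zero_le _) hj)
    calc n i ^ 2 + ∑ j ∈ s, n j ^ 2 ≤ n i ^ 2 + (1 + ∑ j ∈ s, (n j - 1)) ^ 2 := by gcongr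
      _ ≤ (1 + (n i - 1 + ∑ j ∈ s, (n j - 1))) ^ 2 := by
        obtain ⟨k, hk⟩ := Nat.exists_eq_add_of_le hni
        rw [hk, show 2 + k - 1 = 1 + k by omega]
        nlinarith

theorem sum_sq_le_sq_sum_sub_one_add_four {ι : Type*} {s : Finset ι} {n : ι → ℕ}
    (hn : ∀ i ∈ s, 2 ≤ n i) (hs : 1 < #s) :
    ∑ i ∈ s, n i ^ 2 ≤ (∑ i ∈ s, (n i - 1)) ^ 2 + 4 := by
  classical
  obtain ⟨i, hi, j, hj, hij⟩ := one_lt_card.mp hs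
  have hj' : j ∈ s.erase i := mem_erase.mpr ⟨hij.symm, hj⟩
  have hrest : ∀ k ∈ s.erase i, 2 ≤ n k := fun k hk => hn k (mem_of_mem_erase hk)
  have hS : 1 ≤ ∑ k ∈ s.erase i, (n k - 1) :=
    (show 1 ≤ n j - 1 by have := hn j hj; omega).trans
      (single_le_sum (f := fun k => n k - 1) (fun _ _ => Nat.zero_le _) hj')
  rw [← add_sum_erase _ _ hi, ← add_sum_erase _ _ hi]
  calc n i ^ 2 + ∑ k ∈ s.erase i, n k ^ 2
      ≤ n i ^ 2 + (1 + ∑ k ∈ s.erase i, (n k - 1)) ^ 2 := by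
        gcongr; exact sum_sq_le_sq_one_add_sum_sub_one hrest
    _ ≤ (n i + (1 + ∑ k ∈ s.erase i, (n k - 1)) - 2) ^ 2 + 4 :=
        sq_add_sq_le_sq_add_sub_two_add_four (hn i hi) (by omega)
    _ = (n i - 1 + ∑ k ∈ s.erase i, (n k - 1)) ^ 2 + 4 := by
        have := hn i hi
        congr 2; omega

theorem card_eq_one_of_four_mul_le_sum_sq {ι : Type*} {s : Finset ι} {n : ι → ℕ} {m : ℕ}
    (hm : 2 ≤ m) (hn : ∀ i ∈ s, 2 ≤ n i) (hsum : ∑ i ∈ s, (n i - 1) ≤ 2 * m)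
    (hsq : 4 * (m * (m + 1)) ≤ ∑ i ∈ s, n i ^ 2) : #s = 1 := by
  rcases lt_trichotomy #s 1 with hs | hs | hs
  · rw [(card_eq_zero (s := s)).mp (by omega), sum_empty] at hsq
    nlinarith
  · exact hs
  · have := sum_sq_le_sq_sum_sub_one_add_four hn hs
    have := Nat.pow_le_pow_left hsum 2
    nlinarith

theorem mul_le_mul_succ_of_add_le {a b m : ℕ} (h : a + b ≤ 2 * m + 1) : a * b ≤ m * (m + 1) := by
  have := four_mul_le_sq_add a b
  have := Nat.pow_le_pow_left h 2
  nlinarith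

theorem add_eq_and_eq_or_eq_of_mul_eq {a b m : ℕ} (hm : 0 < m) (hab : a + b ≤ 2 * m + 1)
    (hmul : a * b = m * (m + 1)) : a + b = 2 * m + 1 ∧ (a = m ∨ b = m) := by
  have h4 := four_mul_le_sq_add a b
  have hsum : a + b = 2 * m + 1 := by
    by_contra hne
    have := Nat.pow_le_pow_left (show a + b ≤ 2 * m by omega) 2
    nlinarith
  refine ⟨hsum, ?_⟩
  have hz : ((a : ℤ) - m) * ((b : ℤ) - m) = 0 := by
    have hsum' : (a : ℤ) + b = 2 * m + 1 := by exact_mod_cast hsum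
    have hmul' : (a : ℤ) * b = m * (m + 1) := by exact_mod_cast hmul
    linear_combination hmul' - (m : ℤ) * hsum'
  rcases mul_eq_zero.mp hz with h | h
  · left; omega
  · right; omega

namespace SimpleGraph

def isoCompleteBipartiteGraphOfAdjIff {α : Type*} {H : SimpleGraph α} (p : α → Prop)
    [DecidablePred p] (hadj : ∀ x y, H.Adj x y ↔ (p x ↔ ¬ p y)) :
    H ≃g completeBipartiteGraph {x // p x} {x // ¬ p x} where
  toEquiv := (Equiv.sumCompl p).symm
  map_rel_iff' {x y} := by
    by_cases hx : p x <;> by_cases hy : p y <;> simp [Equiv.sumCompl, hx, hy, hadj]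

variable {V : Type*} [Fintype V] {G : SimpleGraph V} [DecidableEq G.ConnectedComponent]
  {c : V → Bool}

def ConnectedComponent.colorClass (C : G.ConnectedComponent) (c : V → Bool) (b : Bool) :
    Finset V :=
  {v | G.connectedComponentMk v = C ∧ c v = b}

namespace ConnectedComponent

@[simp]
theorem mem_colorClass {C : G.ConnectedComponent} {b : Bool} {v : V} :
    v ∈ C.colorClass c b ↔ G.connectedComponentMk v = C ∧ c v = b := by
  simp [colorClass]

theorem card_filter_eq_card_colorClass_add (C : G.ConnectedComponent) (c : V → Bool) :
    #{v | G.connectedComponentMk v = C} = #(C.colorClass c false) + #(C.colorClass c true) := by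
  classical
  rw [← card_union_of_disjoint]
  · congr 1; ext v; cases hv : c v <;> simp [hv]
  · rw [Finset.disjoint_left]; intro v hf ht
    rw [mem_colorClass] at hf ht; simp_all

theorem colorClass_nonempty (hc : ∀ ⦃u v⦄, G.Adj u v → c u ≠ c v) {u v : V} (huv : G.Adj u v)
    (b : Bool) : ((G.connectedComponentMk u).colorClass c b).Nonempty := by
  have hv := connectedComponentMk_eq_of_adj huv
  by_cases hu : c u = b
  · exact ⟨u, mem_colorClass.mpr ⟨rfl, hu⟩⟩
  · refine ⟨v, mem_colorClass.mpr ⟨hv.symm, ?_⟩⟩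
    have := hc huv
    cases b <;> simp_all

end ConnectedComponent

open ConnectedComponent

theorem two_le_card_filter_of_adj (hc : ∀ ⦃u v⦄, G.Adj u v → c u ≠ c v) {u v : V}
    (huv : G.Adj u v) : 2 ≤ #{w | G.connectedComponentMk w = G.connectedComponentMk u} := by
  rw [card_filter_eq_card_colorClass_add _ c]
  have := (colorClass_nonempty hc huv false).card_pos
  have := (colorClass_nonempty hc huv true).card_pos
  omega

theorem nonempty_induce_iso_completeBipartiteGraph (hc : ∀ ⦃u v⦄, G.Adj u v → c u ≠ c v)
    {C : G.ConnectedComponent}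
    (hcomplete : ∀ u ∈ C.colorClass c false, ∀ w ∈ C.colorClass c true, G.Adj u w)
    {m : ℕ} (hm : 0 < m) (hcard : #{v | G.connectedComponentMk v = C} ≤ 2 * m + 1)
    (hmul : #(C.colorClass c false) * #(C.colorClass c true) = m * (m + 1)) :
    Nonempty (G.induce {v | G.connectedComponentMk v = C} ≃g
      completeBipartiteGraph (Fin m) (Fin (m + 1))) := by
  rw [card_filter_eq_card_colorClass_add C c] at hcard
  obtain ⟨hab, hm_or⟩ := add_eq_and_eq_or_eq_of_mul_eq hm hcard hmul
  obtain ⟨b₀, hb₀⟩ : ∃ b₀, #(C.colorClass c b₀) = m := hm_or.elim (⟨false, ·⟩) (⟨true, ·⟩)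
  have hadj : ∀ u w, G.connectedComponentMk u = C → G.connectedComponentMk w = C →
      (G.Adj u w ↔ c u ≠ c w) := by
    refine fun u w hu hw => ⟨fun h => hc h, fun hne => ?_⟩
    cases hcu : c u
    · exact hcomplete u (mem_colorClass.mpr ⟨hu, hcu⟩) w (mem_colorClass.mpr ⟨hw, by simp_all⟩)
    · exact (hcomplete w (mem_colorClass.mpr ⟨hw, by simp_all⟩) u
        (mem_colorClass.mpr ⟨hu, hcu⟩)).symm
  let S := {v | G.connectedComponentMk v = C}
  have hp : Fintype.card {x : S // c x.1 = b₀} = m := by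
    rw [← hb₀]
    calc _ = Fintype.card {v // G.connectedComponentMk v = C ∧ c v = b₀} :=
          Fintype.card_congr (Equiv.subtypeSubtypeEquivSubtypeInter _ (c · = b₀))
      _ = _ := Fintype.card_subtype _
  have hnp : Fintype.card {x : S // ¬ c x.1 = b₀} = m + 1 := by
    rw [Fintype.card_subtype_compl, hp, Fintype.card_subtype]
    change #{v | G.connectedComponentMk v = C} - m = m + 1
    rw [card_filter_eq_card_colorClass_add C c]
    omega
  refine ⟨(isoCompleteBipartiteGraphOfAdjIff (fun x : S => c x.1 = b₀) fun x y => ?_).trans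
    (completeBipartiteGraphCongr (Fintype.equivFinOfCardEq hp) (Fintype.equivFinOfCardEq hnp))⟩
  rw [comap_adj, Function.Embedding.coe_subtype, hadj x y x.2 y.2]
  cases b₀ <;> cases c x <;> cases c y <;> simp

variable {N : Finset G.ConnectedComponent}

theorem sum_card_colorClass_eq_sum_mul :
    ∑ v with c v = false ∧ G.connectedComponentMk v ∈ N,
        #((G.connectedComponentMk v).colorClass c true) =
      ∑ C ∈ N, #(C.colorClass c false) * #(C.colorClass c true) := by
  rw [← sum_fiberwise_of_maps_to (t := N) (g := G.connectedComponentMk) (by simp)]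
  refine sum_congr rfl fun C hC => ?_
  have hfib : filter (G.connectedComponentMk · = C)
      {v | c v = false ∧ G.connectedComponentMk v ∈ N} = C.colorClass c false := by
    ext v; simp only [mem_filter, mem_univ, true_and, mem_colorClass]
    constructor
    · rintro ⟨⟨hv, -⟩, rfl⟩; exact ⟨rfl, hv⟩
    · rintro ⟨rfl, hv⟩; exact ⟨⟨hv, hC⟩, rfl⟩
  rw [← hfib, ← smul_eq_mul, ← sum_const]
  exact sum_congr rfl fun v hv => by rw [(mem_filter.mp hv).2]

variable [DecidableRel G.Adj]

theorem neighborFinset_subset_colorClass (hc : ∀ ⦃u v⦄, G.Adj u v → c u ≠ c v) (v : V) :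
    G.neighborFinset v ⊆ (G.connectedComponentMk v).colorClass c (!c v) := by
  intro w hw
  rw [mem_neighborFinset] at hw
  refine mem_colorClass.mpr ⟨(connectedComponentMk_eq_of_adj hw).symm, ?_⟩
  have := hc hw
  cases hv : c v <;> simp_all

theorem degree_le_card_colorClass (hc : ∀ ⦃u v⦄, G.Adj u v → c u ≠ c v) {v : V}
    (hv : c v = false) : G.degree v ≤ #((G.connectedComponentMk v).colorClass c true) := by
  simpa [hv] using card_le_card (neighborFinset_subset_colorClass hc v)

theorem sum_degree_eq_card_edgeFinset (hc : ∀ ⦃u v⦄, G.Adj u v → c u ≠ c v)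
    (hN : ∀ ⦃u v⦄, G.Adj u v → G.connectedComponentMk u ∈ N) :
    ∑ v with c v = false ∧ G.connectedComponentMk v ∈ N, G.degree v = #G.edgeFinset := by
  have hbip : G.IsBipartiteWith ↑({v | c v = false} : Finset V) ↑({v | c v = true} : Finset V) :=
    { disjoint := by
        rw [disjoint_coe]; exact disjoint_filter.mpr fun v _ h => by simp [h]
      mem_of_adj := fun u v huv => by
        have := hc huv
        cases hu : c u <;> simp_all }
  rw [← isBipartiteWith_sum_degrees_eq_card_edges hbip, ← filter_filter]
  refine sum_filter_of_ne fun v _ hv => ?_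
  obtain ⟨w, hw⟩ := card_pos.mp (Nat.pos_of_ne_zero hv)
  exact hN ((mem_neighborFinset G v w).mp hw)

theorem card_edgeFinset_le_sum_mul (hc : ∀ ⦃u v⦄, G.Adj u v → c u ≠ c v)
    (hN : ∀ ⦃u v⦄, G.Adj u v → G.connectedComponentMk u ∈ N) :
    #G.edgeFinset ≤ ∑ C ∈ N, #(C.colorClass c false) * #(C.colorClass c true) := by
  rw [← sum_degree_eq_card_edgeFinset hc hN, ← sum_card_colorClass_eq_sum_mul]
  refine sum_le_sum fun v hv => ?_
  exact degree_le_card_colorClass hc (mem_filter.mp hv).2.1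

theorem adj_of_card_edgeFinset_eq_sum_mul (hc : ∀ ⦃u v⦄, G.Adj u v → c u ≠ c v)
    (hN : ∀ ⦃u v⦄, G.Adj u v → G.connectedComponentMk u ∈ N)
    (hE : #G.edgeFinset = ∑ C ∈ N, #(C.colorClass c false) * #(C.colorClass c true))
    {C : G.ConnectedComponent} (hC : C ∈ N) {u w : V} (hu : u ∈ C.colorClass c false)
    (hw : w ∈ C.colorClass c true) : G.Adj u w := by
  rw [← sum_degree_eq_card_edgeFinset hc hN, ← sum_card_colorClass_eq_sum_mul,
    sum_eq_sum_iff_of_le fun v hv => degree_le_card_colorClass hc (mem_filter.mp hv).2.1] at hE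
  obtain ⟨rfl, hcu⟩ := mem_colorClass.mp hu
  have hsub := neighborFinset_subset_colorClass hc u
  rw [hcu, Bool.not_false] at hsub
  have hdeg := hE u (mem_filter.mpr ⟨mem_univ u, hcu, hC⟩)
  rw [← card_neighborFinset_eq_degree] at hdeg
  exact (mem_neighborFinset G u w).mp (eq_of_subset_of_card_le hsub hdeg.ge ▸ hw)

theorem four_mul_card_edgeFinset_le_sum_sq (hc : ∀ ⦃u v⦄, G.Adj u v → c u ≠ c v)
    (hN : ∀ ⦃u v⦄, G.Adj u v → G.connectedComponentMk u ∈ N) :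
    4 * #G.edgeFinset ≤ ∑ C ∈ N, #{v | G.connectedComponentMk v = C} ^ 2 := by
  calc 4 * #G.edgeFinset
      ≤ ∑ C ∈ N, 4 * #(C.colorClass c false) * #(C.colorClass c true) := by
        simp_rw [mul_assoc, ← mul_sum]
        exact Nat.mul_le_mul_left 4 (card_edgeFinset_le_sum_mul hc hN)
    _ ≤ ∑ C ∈ N, #{v | G.connectedComponentMk v = C} ^ 2 :=
        sum_le_sum fun C _ => card_filter_eq_card_colorClass_add C c ▸ four_mul_le_sq_add _ _

end SimpleGraph

open SimpleGraph SimpleGraph.ConnectedComponent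

open scoped Classical in
theorem stmt_2 {V : Type*} [Fintype V] (Γ : SimpleGraph V)
    (hbip : ∃ c : V → Bool, ∀ ⦃u v : V⦄, Γ.Adj u v → c u ≠ c v)
    (m : ℕ) (hm : 2 ≤ m)
    (hsum : (∑ C ∈ Finset.univ.filter
        (fun C : Γ.ConnectedComponent => ∃ u v, Γ.Adj u v ∧ Γ.connectedComponentMk u = C),
        ((Finset.univ.filter (fun v : V => Γ.connectedComponentMk v = C)).card - 1)) ≤ 2 * m) :
    Γ.edgeFinset.card ≤ m * (m + 1) ∧
    (Γ.edgeFinset.card = m * (m + 1) →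
      (∃! C : Γ.ConnectedComponent, ∃ u v, Γ.Adj u v ∧ Γ.connectedComponentMk u = C) ∧
      ∀ C : Γ.ConnectedComponent, (∃ u v, Γ.Adj u v ∧ Γ.connectedComponentMk u = C) →
        Nonempty ((Γ.induce {v : V | Γ.connectedComponentMk v = C}) ≃g
          completeBipartiteGraph (Fin m) (Fin (m + 1)))) := by
  obtain ⟨c, hc⟩ := hbip
  set N := univ.filter
    (fun C : Γ.ConnectedComponent => ∃ u v, Γ.Adj u v ∧ Γ.connectedComponentMk u = C) with hN
  have hN_of_adj : ∀ ⦃u v⦄, Γ.Adj u v → Γ.connectedComponentMk u ∈ N :=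
    fun u v huv => mem_filter.mpr ⟨mem_univ _, u, v, huv, rfl⟩
  have htwo : ∀ C ∈ N, 2 ≤ #{v | Γ.connectedComponentMk v = C} := fun C hC => by
    obtain ⟨-, u, v, huv, rfl⟩ := mem_filter.mp hC
    exact two_le_card_filter_of_adj hc huv
  have hsq := four_mul_card_edgeFinset_le_sum_sq hc hN_of_adj
  refine ⟨?_, fun heq => ?_⟩
  · have h2m : (1 + 2 * m) ^ 2 = 4 * (m * (m + 1)) + 1 := by ring
    have := sum_sq_le_sq_one_add_sum_sub_one htwo
    have := Nat.pow_le_pow_left (Nat.add_le_add_left hsum 1) 2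
    omega
  obtain ⟨C₀, hN₀⟩ := card_eq_one.mp (card_eq_one_of_four_mul_le_sum_sq hm htwo hsum (heq ▸ hsq))
  have hmem : ∀ C, (∃ u v, Γ.Adj u v ∧ Γ.connectedComponentMk u = C) ↔ C = C₀ := fun C => by
    simpa [hN] using congrArg (C ∈ ·) hN₀
  have hE := card_edgeFinset_le_sum_mul hc hN_of_adj
  rw [hN₀, sum_singleton] at hE hsum
  have hn : #{v | Γ.connectedComponentMk v = C₀} ≤ 2 * m + 1 := by omega
  have hmul : #(C₀.colorClass c false) * #(C₀.colorClass c true) = m * (m + 1) :=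
    (mul_le_mul_succ_of_add_le (card_filter_eq_card_colorClass_add C₀ c ▸ hn)).antisymm (heq ▸ hE)
  refine ⟨⟨C₀, (hmem C₀).mpr rfl, fun C hC => (hmem C).mp hC⟩, fun C hC => ?_⟩
  obtain rfl := (hmem C).mp hC
  refine nonempty_induce_iso_completeBipartiteGraph hc (fun u hu w hw => ?_) (by omega) hn hmul
  exact adj_of_card_edgeFinset_eq_sum_mul hc hN_of_adj (by rw [hN₀, sum_singleton]; omega)
    (by simp [hN₀]) hu hw
end

section
/- Consider the class C_n of finite undirected multigraphs Γ on n vertices (no loops) with edges colored by three colors {magenta, yellow, cyan} such that between any two vertices there is at most one edge of each color. For colors ∈ {my, yc, mc} let Γ_colors be the subgraph with all vertices and only edges of the two indicated colors, and define Σ(Γ) = Σ over connected components C of Γ of (val_my(C) + val_yc(C) + val_mc(C) - 2), where val_colors(C) is the number of connected components of C ∩ Γ_colors. Then Σ(Γ) ≤ n for every Γ ∈ C_n. -/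
/-- The three edge colors for graphs in the class `C_n`. -/
inductive Col : Type
  | magenta | yellow | cyan
  deriving DecidableEq

/-- A three-colored loopless multigraph with at most one edge of each color between
any pair of vertices is the same data as three simple graphs `Gm`, `Gy`, `Gc`
(the magenta, yellow and cyan edges).  `colG Gm Gy Gc x` is the simple graph of
edges of color `x`. -/
def colG {V : Type*} (Gm Gy Gc : SimpleGraph V) : Col → SimpleGraph V
  | Col.magenta => Gm
  | Col.yellow => Gy
  | Col.cyan => Gc

open scoped Classical in
/-- The function `Σ(Γ) = ∑_{C ∈ CC(Γ)} (val_my C + val_yc C + val_mc C - 2)`,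
where `val_colors C` is the number of connected components of the induced subgraph
of the two-colored subgraph `Γ_colors` on the vertex set of the component `C`. -/
noncomputable def SigmaFn {V : Type*} [Fintype V] (Gm Gy Gc : SimpleGraph V) : ℕ :=
  ∑ C : (Gm ⊔ Gy ⊔ Gc).ConnectedComponent,
    (Fintype.card
        ((Gm ⊔ Gy).induce {v : V | (Gm ⊔ Gy ⊔ Gc).connectedComponentMk v = C}).ConnectedComponent
      + Fintype.card
        ((Gy ⊔ Gc).induce {v : V | (Gm ⊔ Gy ⊔ Gc).connectedComponentMk v = C}).ConnectedComponent
      + Fintype.card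
        ((Gm ⊔ Gc).induce {v : V | (Gm ⊔ Gy ⊔ Gc).connectedComponentMk v = C}).ConnectedComponent
      - 2)



open SimpleGraph

-- cross edge
lemma cross_edge {W : Type*} {G : SimpleGraph W} {T : Set W} :
    ∀ {a b : W}, G.Walk a b → a ∈ T → b ∉ T → ∃ x ∈ T, ∃ y, y ∉ T ∧ G.Adj x y := by
  intro a b p
  induction p with
  | nil => intro ha hb; exact absurd ha hb
  | @cons a u b h q ih =>
      intro ha hb
      by_cases hu : u ∈ T
      · exact ih hu hb
      · exact ⟨a, ha, u, hu, h⟩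

lemma supp_induce_connected {V : Type*} (G : SimpleGraph V) (C : G.ConnectedComponent) :
    (G.induce C.supp).Connected := by
  have key : ∀ {u v : V} (_ : G.Walk u v) (hu : G.connectedComponentMk u = C)
      (hv : G.connectedComponentMk v = C),
      (G.induce C.supp).Reachable ⟨u, hu⟩ ⟨v, hv⟩ := by
    intro u v p
    induction p with
    | nil => intro hu hv; rfl
    | @cons u w v h q ih =>
        intro hu hv
        have hw : G.connectedComponentMk w = C := by
          rw [← hu]; exact (SimpleGraph.ConnectedComponent.connectedComponentMk_eq_of_adj h).symm
        have : (G.induce C.supp).Adj ⟨u, hu⟩ ⟨w, hw⟩ := by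
          simpa using h
        exact this.reachable.trans (ih hw hv)
  obtain ⟨v0, hv0⟩ := C.exists_rep
  have hne : Nonempty C.supp := ⟨⟨v0, hv0⟩⟩
  refine ⟨?_⟩
  rintro ⟨u, hu⟩ ⟨v, hv⟩
  have : G.Reachable u v := ConnectedComponent.exact (hu.trans hv.symm)
  obtain ⟨p⟩ := this
  exact key p hu hv

open Finset in
lemma image_card_key {W X Y Z : Type*} [Fintype W] [DecidableEq X] [DecidableEq Y] [DecidableEq Z] {G : SimpleGraph W}
    (hG : G.Connected)
    (f : W → X) (g : W → Y) (h : W → Z)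
    (hadj : ∀ ⦃w w'⦄, G.Adj w w' →
      (f w = f w' ∧ g w = g w') ∨ (g w = g w' ∧ h w = h w') ∨ (f w = f w' ∧ h w = h w')) :
    (Finset.univ.image f).card + (Finset.univ.image g).card + (Finset.univ.image h).card
      ≤ Fintype.card W + 2 := by
  classical
  have main : ∀ m (T : Finset W), T.Nonempty → Tᶜ.card = m →
      (univ.image f).card + (univ.image g).card + (univ.image h).card
        ≤ (T.image f).card + (T.image g).card + (T.image h).card + m := by
    intro m
    induction m with
    | zero =>
        intro T _ hcard
        have : T = univ := by
          have : Tᶜ = ∅ := Finset.card_eq_zero.mp hcard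
          simpa [Finset.compl_eq_empty_iff] using this
        subst this; omega
    | succ m ih =>
        intro T hT hcard
        obtain ⟨a, ha⟩ := hT
        have hTc : Tᶜ.Nonempty := Finset.card_pos.mp (by omega)
        obtain ⟨b, hb⟩ := hTc
        have hb' : b ∉ T := Finset.mem_compl.mp hb
        obtain ⟨p⟩ := hG.preconnected a b
        obtain ⟨x, hx, y, hy, hxy⟩ :=
          cross_edge (T := {w | w ∈ T}) p (by simpa using ha) (by simpa using hb')
        have hx : x ∈ T := by simpa using hx
        have hy : y ∉ T := by simpa using hy
        have hcT' : (insert y T)ᶜ.card = m := by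
          rw [Finset.compl_insert, Finset.card_erase_of_mem (Finset.mem_compl.mpr hy), hcard]
          omega
        have step := ih (insert y T) ⟨y, Finset.mem_insert_self y T⟩ hcT'
        have hfle : ((insert y T).image f).card ≤ (T.image f).card + 1 := by
          rw [Finset.image_insert]; exact Finset.card_insert_le _ _
        have hgle : ((insert y T).image g).card ≤ (T.image g).card + 1 := by
          rw [Finset.image_insert]; exact Finset.card_insert_le _ _
        have hhle : ((insert y T).image h).card ≤ (T.image h).card + 1 := by
          rw [Finset.image_insert]; exact Finset.card_insert_le _ _
        have eqf : f x = f y → ((insert y T).image f).card = (T.image f).card := by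
          intro h1
          rw [Finset.image_insert, Finset.insert_eq_self.mpr (h1 ▸ Finset.mem_image_of_mem f hx)]
        have eqg : g x = g y → ((insert y T).image g).card = (T.image g).card := by
          intro h1
          rw [Finset.image_insert, Finset.insert_eq_self.mpr (h1 ▸ Finset.mem_image_of_mem g hx)]
        have eqh : h x = h y → ((insert y T).image h).card = (T.image h).card := by
          intro h1
          rw [Finset.image_insert, Finset.insert_eq_self.mpr (h1 ▸ Finset.mem_image_of_mem h hx)]
        rcases hadj hxy with ⟨h1, h2⟩ | ⟨h1, h2⟩ | ⟨h1, h2⟩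
        · have e1 := eqf h1; have e2 := eqg h2; omega
        · have e1 := eqg h1; have e2 := eqh h2; omega
        · have e1 := eqf h1; have e2 := eqh h2; omega
  have : Nonempty W := hG.nonempty
  obtain ⟨w₀⟩ := this
  have hcard : ({w₀} : Finset W)ᶜ.card = Fintype.card W - 1 := by
    rw [Finset.card_compl, Finset.card_singleton]
  have := main (Fintype.card W - 1) {w₀} ⟨w₀, Finset.mem_singleton_self w₀⟩ hcard
  have h1 : (({w₀} : Finset W).image f).card ≤ 1 := (Finset.card_image_le).trans (by simp)
  have h2 : (({w₀} : Finset W).image g).card ≤ 1 := (Finset.card_image_le).trans (by simp)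
  have h3 : (({w₀} : Finset W).image h).card ≤ 1 := (Finset.card_image_le).trans (by simp)
  have hpos : 1 ≤ Fintype.card W := Fintype.card_pos_iff.mpr ⟨w₀⟩
  omega

lemma comp_bound {V : Type*} [Fintype V] (Gm Gy Gc : SimpleGraph V)
    (C : (Gm ⊔ Gy ⊔ Gc).ConnectedComponent) :
    Nat.card ((Gm ⊔ Gy).induce {v : V | (Gm ⊔ Gy ⊔ Gc).connectedComponentMk v = C}).ConnectedComponent
      + Nat.card ((Gy ⊔ Gc).induce {v : V | (Gm ⊔ Gy ⊔ Gc).connectedComponentMk v = C}).ConnectedComponent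
      + Nat.card ((Gm ⊔ Gc).induce {v : V | (Gm ⊔ Gy ⊔ Gc).connectedComponentMk v = C}).ConnectedComponent
      ≤ Nat.card {v : V | (Gm ⊔ Gy ⊔ Gc).connectedComponentMk v = C} + 2 := by
  classical
  set S : Set V := {v : V | (Gm ⊔ Gy ⊔ Gc).connectedComponentMk v = C} with hS
  have hconn : ((Gm ⊔ Gy ⊔ Gc).induce S).Connected := supp_induce_connected _ C
  set f : ↥S → ((Gm ⊔ Gy).induce S).ConnectedComponent :=
    fun w => ((Gm ⊔ Gy).induce S).connectedComponentMk w with hf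
  set g : ↥S → ((Gy ⊔ Gc).induce S).ConnectedComponent :=
    fun w => ((Gy ⊔ Gc).induce S).connectedComponentMk w with hg
  set h : ↥S → ((Gm ⊔ Gc).induce S).ConnectedComponent :=
    fun w => ((Gm ⊔ Gc).induce S).connectedComponentMk w with hh
  have hfs : Function.Surjective f := fun c => c.exists_rep
  have hgs : Function.Surjective g := fun c => c.exists_rep
  have hhs : Function.Surjective h := fun c => c.exists_rep
  have hadj : ∀ ⦃w w' : ↥S⦄, ((Gm ⊔ Gy ⊔ Gc).induce S).Adj w w' →
      (f w = f w' ∧ g w = g w') ∨ (g w = g w' ∧ h w = h w') ∨ (f w = f w' ∧ h w = h w') := by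
    intro w w' hww
    have : Gm.Adj ↑w ↑w' ∨ Gy.Adj ↑w ↑w' ∨ Gc.Adj ↑w ↑w' := by
      simpa [sup_adj, or_assoc] using hww
    rcases this with hA | hA | hA
    · refine Or.inr (Or.inr ⟨?_, ?_⟩)
      · exact SimpleGraph.ConnectedComponent.connectedComponentMk_eq_of_adj
          (by simp [SimpleGraph.comap_adj, Set.mem_setOf_eq, sup_adj]; exact Or.inl hA)
      · exact SimpleGraph.ConnectedComponent.connectedComponentMk_eq_of_adj
          (by simp [SimpleGraph.comap_adj, Set.mem_setOf_eq, sup_adj]; exact Or.inl hA)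
    · refine Or.inl ⟨?_, ?_⟩
      · exact SimpleGraph.ConnectedComponent.connectedComponentMk_eq_of_adj
          (by simp [SimpleGraph.comap_adj, Set.mem_setOf_eq, sup_adj]; exact Or.inr hA)
      · exact SimpleGraph.ConnectedComponent.connectedComponentMk_eq_of_adj
          (by simp [SimpleGraph.comap_adj, Set.mem_setOf_eq, sup_adj]; exact Or.inl hA)
    · refine Or.inr (Or.inl ⟨?_, ?_⟩)
      · exact SimpleGraph.ConnectedComponent.connectedComponentMk_eq_of_adj
          (by simp [SimpleGraph.comap_adj, Set.mem_setOf_eq, sup_adj]; exact Or.inr hA)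
      · exact SimpleGraph.ConnectedComponent.connectedComponentMk_eq_of_adj
          (by simp [SimpleGraph.comap_adj, Set.mem_setOf_eq, sup_adj]; exact Or.inr hA)
  have key := image_card_key hconn f g h hadj
  rw [Finset.image_univ_of_surjective hfs, Finset.image_univ_of_surjective hgs,
    Finset.image_univ_of_surjective hhs] at key
  simpa [Nat.card_eq_fintype_card] using key


theorem stmt_12 {V : Type*} [Fintype V] (Gm Gy Gc : SimpleGraph V) :
    SigmaFn Gm Gy Gc ≤ Fintype.card V := by
  classical
  unfold SigmaFn
  have hsum : ∑ C : (Gm ⊔ Gy ⊔ Gc).ConnectedComponent,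
      Fintype.card {v : V | (Gm ⊔ Gy ⊔ Gc).connectedComponentMk v = C} = Fintype.card V := by
    rw [← Fintype.card_sigma]
    exact Fintype.card_congr (Equiv.sigmaFiberEquiv _)
  calc _ ≤ ∑ C : (Gm ⊔ Gy ⊔ Gc).ConnectedComponent,
        Fintype.card {v : V | (Gm ⊔ Gy ⊔ Gc).connectedComponentMk v = C} := by
        refine Finset.sum_le_sum fun C _ => ?_
        have h := comp_bound Gm Gy Gc C
        simp only [Nat.card_eq_fintype_card] at h
        omega
    _ = Fintype.card V := hsum
end

section
/- Let Γ ∈ C_n and let Γ' = Γ ∪ e be obtained by adding a new edge e (of an allowed color) between two vertices p, q lying in different connected components of Γ. Then Σ(Γ') = Σ(Γ). -/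
namespace AuxStmt15

open SimpleGraph

variable {V : Type*}

/-- A walk in `H ≤ K` between two vertices of a `K`-component stays in the component. -/
lemma induce_reach {H K : SimpleGraph V} (hHK : H ≤ K) {C : K.ConnectedComponent} :
    ∀ {u v : V} (_ : H.Walk u v) (hu : K.connectedComponentMk u = C)
      (hv : K.connectedComponentMk v = C),
      (H.induce {x | K.connectedComponentMk x = C}).Reachable ⟨u, hu⟩ ⟨v, hv⟩
  | _, _, SimpleGraph.Walk.nil, _, _ => Reachable.refl _
  | u, v, SimpleGraph.Walk.cons hadj w, hu, hv => by
    have hx := (SimpleGraph.ConnectedComponent.connectedComponentMk_eq_of_adj (hHK hadj)).symm.trans hu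
    have hA : (H.induce {x | K.connectedComponentMk x = C}).Adj ⟨u, hu⟩ ⟨_, hx⟩ := hadj
    exact hA.reachable.trans (induce_reach hHK w hx hv)

/-- Reachability after adding the edge `{p, q}`. -/
lemma reach_sup_edge {H : SimpleGraph V} {p q : V} :
    ∀ {u v : V}, (H ⊔ SimpleGraph.fromEdgeSet {s(p, q)}).Walk u v →
      H.Reachable u v ∨ (H.Reachable u p ∧ H.Reachable q v) ∨
        (H.Reachable u q ∧ H.Reachable p v)
  | _, _, SimpleGraph.Walk.nil => Or.inl (Reachable.refl _)
  | u, v, SimpleGraph.Walk.cons hadj w => by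
    have ih := reach_sup_edge w
    rcases hadj with h | h
    · rcases ih with h1 | ⟨h1, h2⟩ | ⟨h1, h2⟩
      · exact Or.inl (h.reachable.trans h1)
      · exact Or.inr (Or.inl ⟨h.reachable.trans h1, h2⟩)
      · exact Or.inr (Or.inr ⟨h.reachable.trans h1, h2⟩)
    · rw [SimpleGraph.fromEdgeSet_adj, Set.mem_singleton_iff, Sym2.eq_iff] at h
      rcases h with ⟨(⟨rfl, rfl⟩ | ⟨rfl, rfl⟩), _⟩
      · rcases ih with h1 | ⟨h1, h2⟩ | ⟨h1, h2⟩
        · exact Or.inr (Or.inl ⟨Reachable.refl _, h1⟩)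
        · exact Or.inl (h1.symm.trans h2)
        · exact Or.inl h2
      · rcases ih with h1 | ⟨h1, h2⟩ | ⟨h1, h2⟩
        · exact Or.inr (Or.inr ⟨Reachable.refl _, h1⟩)
        · exact Or.inl h2
        · exact Or.inl (h1.symm.trans h2)

/-- `Fintype.card` does not depend on the instance. -/
lemma card_irrel {α : Type*} (i1 i2 : Fintype α) : @Fintype.card α i1 = @Fintype.card α i2 := by
  congr 1
  exact Subsingleton.elim i1 i2

/-- Components of `H` refine components of `K ≥ H`; counting them fiberwise.
The `Fintype` instances are parameters so that applications unify by assignment. -/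
lemma sum_card_induce [Fintype V] {H K : SimpleGraph V} (hHK : H ≤ K)
    {iH : Fintype H.ConnectedComponent} {iK : Fintype K.ConnectedComponent}
    {iC : ∀ C : K.ConnectedComponent,
      Fintype (H.induce {v | K.connectedComponentMk v = C}).ConnectedComponent} :
    Finset.sum (@Finset.univ _ iK)
      (fun C => @Fintype.card _ (iC C))
      = @Fintype.card _ iH := by
  classical
  have hu : (@Finset.univ _ iK) = (Finset.univ : Finset K.ConnectedComponent) :=
    congrArg (fun i => @Finset.univ _ i) (Subsingleton.elim _ _)
  rw [hu, Finset.sum_congr rfl fun C _ => card_irrel (iC C) _,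
    show @Fintype.card _ iH = Fintype.card H.ConnectedComponent from card_irrel _ _]
  have key : ∀ C : K.ConnectedComponent,
      Fintype.card (H.induce {v | K.connectedComponentMk v = C}).ConnectedComponent
      = Fintype.card {D : H.ConnectedComponent //
          D.map (SimpleGraph.Hom.ofLE hHK) = C} := by
    intro C
    refine Fintype.card_congr (Equiv.ofBijective
      (fun D => ⟨D.map (SimpleGraph.Embedding.induce
        {v | K.connectedComponentMk v = C}).toHom, ?_⟩) ⟨?_, ?_⟩)
    · refine D.ind fun x => ?_
      simp only [ConnectedComponent.map_mk]
      exact x.2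
    · intro D D' h
      refine ConnectedComponent.ind₂ (fun x x' hxx' => ?_) D D' h
      simp only [ConnectedComponent.map_mk, Subtype.mk.injEq, ConnectedComponent.eq] at hxx'
      obtain ⟨w⟩ := hxx'
      exact ConnectedComponent.sound (induce_reach hHK w x.2 x'.2)
    · rintro ⟨D, hD⟩
      revert hD
      refine D.ind fun v hD => ?_
      simp only [ConnectedComponent.map_mk] at hD
      exact ⟨(H.induce _).connectedComponentMk ⟨v, hD⟩, rfl⟩
  rw [Finset.sum_congr rfl fun C _ => key C]
  exact ((Fintype.card_congr
    (Equiv.sigmaFiberEquiv (ConnectedComponent.map (SimpleGraph.Hom.ofLE hHK))).symm).trans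
    Fintype.card_sigma).symm

/-- Adding an edge between two components decreases the number of components by one. -/
lemma card_cc_sup_edge [Fintype V] {H : SimpleGraph V} {p q : V} (hpq : p ≠ q)
    (hsep : ¬ H.Reachable p q)
    {iH : Fintype H.ConnectedComponent}
    {iH' : Fintype (H ⊔ SimpleGraph.fromEdgeSet {s(p, q)}).ConnectedComponent} :
    @Fintype.card _ iH' + 1 = @Fintype.card _ iH := by
  classical
  rw [show @Fintype.card _ iH'
      = Fintype.card (H ⊔ SimpleGraph.fromEdgeSet {s(p, q)}).ConnectedComponent from
      card_irrel _ _,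
    show @Fintype.card _ iH = Fintype.card H.ConnectedComponent from card_irrel _ _]
  set H' := H ⊔ SimpleGraph.fromEdgeSet {s(p, q)} with hH'
  have hle : H ≤ H' := le_sup_left
  set π : H.ConnectedComponent → H'.ConnectedComponent :=
    ConnectedComponent.map (SimpleGraph.Hom.ofLE hle) with hπ
  have hπmk : ∀ v : V, π (H.connectedComponentMk v) = H'.connectedComponentMk v :=
    fun v => rfl
  have hpq' : H'.Adj p q := Or.inr (by
    rw [SimpleGraph.fromEdgeSet_adj]; exact ⟨rfl, hpq⟩)
  set c₀ : H'.ConnectedComponent := H'.connectedComponentMk p with hc₀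
  have hqc₀ : H'.connectedComponentMk q = c₀ :=
    (SimpleGraph.ConnectedComponent.connectedComponentMk_eq_of_adj hpq').symm
  -- the fiber over `c₀` has exactly two elements
  have hfib0 : Fintype.card {D : H.ConnectedComponent // π D = c₀} = 2 := by
    set a : {D : H.ConnectedComponent // π D = c₀} := ⟨H.connectedComponentMk p, rfl⟩
    set b : {D : H.ConnectedComponent // π D = c₀} :=
      ⟨H.connectedComponentMk q, (hπmk q).trans hqc₀⟩
    have hab : a ≠ b := by
      intro h
      exact hsep (ConnectedComponent.eq.mp (congrArg Subtype.val h))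
    have huniv : (Finset.univ : Finset {D : H.ConnectedComponent // π D = c₀}) = {a, b} := by
      ext z
      simp only [Finset.mem_univ, Finset.mem_insert, Finset.mem_singleton, true_iff]
      obtain ⟨D, hD⟩ := z
      revert hD
      refine D.ind fun u hD => ?_
      rw [hπmk u] at hD
      obtain ⟨w⟩ := ConnectedComponent.eq.mp hD
      rcases reach_sup_edge w with h1 | ⟨h1, h2⟩ | ⟨h1, h2⟩
      · exact Or.inl (Subtype.ext (ConnectedComponent.sound h1))
      · exact absurd h2.symm hsep
      · exact Or.inr (Subtype.ext (ConnectedComponent.sound h1))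
    rw [← Finset.card_univ, huniv,
      Finset.card_insert_of_notMem (by simpa using hab), Finset.card_singleton]
  -- every other fiber is a singleton
  have hfib1 : ∀ c : H'.ConnectedComponent, c ≠ c₀ →
      Fintype.card {D : H.ConnectedComponent // π D = c} = 1 := by
    intro c hc
    revert hc
    refine c.ind fun v hc => ?_
    rw [Fintype.card_eq_one_iff]
    refine ⟨⟨H.connectedComponentMk v, hπmk v⟩, ?_⟩
    rintro ⟨D, hD⟩
    revert hD
    refine D.ind fun u hD => ?_
    rw [hπmk u] at hD
    obtain ⟨w⟩ := ConnectedComponent.eq.mp hD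
    rcases reach_sup_edge w with h1 | ⟨h1, h2⟩ | ⟨h1, h2⟩
    · exact Subtype.ext (ConnectedComponent.sound h1)
    · exact absurd ((ConnectedComponent.sound (h2.mono hle)).symm.trans hqc₀) hc
    · exact absurd ((ConnectedComponent.sound (h2.mono hle)).symm.trans rfl) hc
  have hcard : Fintype.card H.ConnectedComponent
      = ∑ c : H'.ConnectedComponent, Fintype.card {D : H.ConnectedComponent // π D = c} :=
    (Fintype.card_congr (Equiv.sigmaFiberEquiv π).symm).trans Fintype.card_sigma
  rw [hcard]
  have heach : ∀ c : H'.ConnectedComponent,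
      Fintype.card {D : H.ConnectedComponent // π D = c}
        = 1 + (if c = c₀ then 1 else 0) := by
    intro c
    by_cases h : c = c₀
    · simp [h, hfib0]
    · simp [h, hfib1 c h]
  rw [Finset.sum_congr rfl fun c _ => heach c, Finset.sum_add_distrib]
  simp only [Finset.sum_const, Finset.card_univ, smul_eq_mul, mul_one, Finset.sum_ite_eq',
    Finset.mem_univ, if_true]
  congr 1
  exact card_irrel (α := H'.ConnectedComponent) _ _

lemma arith1 {a b d n a' d' n' : ℕ} (ha : a' + 1 = a) (hd : d' + 1 = d) (hn : n' + 1 = n) :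
    a' + b + d' - 2 * n' = a + b + d - 2 * n := by omega

lemma arith2 {a b d n a' b' n' : ℕ} (ha : a' + 1 = a) (hb : b' + 1 = b) (hn : n' + 1 = n) :
    a' + b' + d - 2 * n' = a + b + d - 2 * n := by omega

lemma arith3 {a b d n b' d' n' : ℕ} (hb : b' + 1 = b) (hd : d' + 1 = d) (hn : n' + 1 = n) :
    a + b' + d' - 2 * n' = a + b + d - 2 * n := by omega

open scoped Classical in
/-- `Σ` in terms of global component counts. -/
lemma sigma_eq [Fintype V] (Gm Gy Gc : SimpleGraph V) :
    SigmaFn Gm Gy Gc =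
      Fintype.card (Gm ⊔ Gy).ConnectedComponent
        + Fintype.card (Gy ⊔ Gc).ConnectedComponent
        + Fintype.card (Gm ⊔ Gc).ConnectedComponent
        - 2 * Fintype.card (Gm ⊔ Gy ⊔ Gc).ConnectedComponent := by
  have h1 : Gm ⊔ Gy ≤ Gm ⊔ Gy ⊔ Gc := le_sup_left
  have h2 : Gy ⊔ Gc ≤ Gm ⊔ Gy ⊔ Gc := sup_le (le_sup_left.trans' le_sup_right) le_sup_right
  have h3 : Gm ⊔ Gc ≤ Gm ⊔ Gy ⊔ Gc := sup_le (le_sup_left.trans' le_sup_left) le_sup_right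
  have hfg : ∀ C ∈ (Finset.univ : Finset (Gm ⊔ Gy ⊔ Gc).ConnectedComponent),
      2 ≤ Fintype.card
        ((Gm ⊔ Gy).induce {v : V | (Gm ⊔ Gy ⊔ Gc).connectedComponentMk v = C}).ConnectedComponent
      + Fintype.card
        ((Gy ⊔ Gc).induce {v : V | (Gm ⊔ Gy ⊔ Gc).connectedComponentMk v = C}).ConnectedComponent
      + Fintype.card
        ((Gm ⊔ Gc).induce {v : V | (Gm ⊔ Gy ⊔ Gc).connectedComponentMk v = C}).ConnectedComponent := by
    intro C _
    refine SimpleGraph.ConnectedComponent.ind (fun w => ?_) C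
    refine le_trans ?_ (Nat.le_add_right _ _)
    show 1 + 1 ≤ _ + _
    refine Nat.add_le_add ?_ ?_
    · exact Fintype.card_pos_iff.mpr ⟨SimpleGraph.connectedComponentMk _ ⟨w, rfl⟩⟩
    · exact Fintype.card_pos_iff.mpr ⟨SimpleGraph.connectedComponentMk _ ⟨w, rfl⟩⟩
  have s1 : ∑ C : (Gm ⊔ Gy ⊔ Gc).ConnectedComponent,
      Fintype.card
        ((Gm ⊔ Gy).induce {v : V | (Gm ⊔ Gy ⊔ Gc).connectedComponentMk v = C}).ConnectedComponent
      = Fintype.card (Gm ⊔ Gy).ConnectedComponent := sum_card_induce h1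
  have s2 : ∑ C : (Gm ⊔ Gy ⊔ Gc).ConnectedComponent,
      Fintype.card
        ((Gy ⊔ Gc).induce {v : V | (Gm ⊔ Gy ⊔ Gc).connectedComponentMk v = C}).ConnectedComponent
      = Fintype.card (Gy ⊔ Gc).ConnectedComponent := sum_card_induce h2
  have s3 : ∑ C : (Gm ⊔ Gy ⊔ Gc).ConnectedComponent,
      Fintype.card
        ((Gm ⊔ Gc).induce {v : V | (Gm ⊔ Gy ⊔ Gc).connectedComponentMk v = C}).ConnectedComponent
      = Fintype.card (Gm ⊔ Gc).ConnectedComponent := sum_card_induce h3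
  rw [SigmaFn]
  rw [Finset.sum_tsub_distrib Finset.univ hfg]
  rw [Finset.sum_add_distrib, Finset.sum_add_distrib, s1, s2, s3]
  rw [Finset.sum_const, Finset.card_univ, smul_eq_mul, mul_comm]

end AuxStmt15

theorem stmt_15 {V : Type*} [Fintype V] (Gm Gy Gc : SimpleGraph V) (p q : V)
    (hpq : p ≠ q) (hsep : ¬ (Gm ⊔ Gy ⊔ Gc).Reachable p q) (c : Col)
    (Gm' Gy' Gc' : SimpleGraph V)
    (hupd : ∀ x : Col, colG Gm' Gy' Gc' x =
      if x = c then colG Gm Gy Gc x ⊔ SimpleGraph.fromEdgeSet {s(p, q)}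
      else colG Gm Gy Gc x) :
    SigmaFn Gm' Gy' Gc' = SigmaFn Gm Gy Gc := by
  have hm := hupd Col.magenta
  have hy := hupd Col.yellow
  have hc := hupd Col.cyan
  simp only [colG] at hm hy hc
  have h1 : Gm ⊔ Gy ≤ Gm ⊔ Gy ⊔ Gc := le_sup_left
  have h2 : Gy ⊔ Gc ≤ Gm ⊔ Gy ⊔ Gc := sup_le (le_sup_left.trans' le_sup_right) le_sup_right
  have h3 : Gm ⊔ Gc ≤ Gm ⊔ Gy ⊔ Gc := sup_le (le_sup_left.trans' le_sup_left) le_sup_right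
  have hsep1 : ¬ (Gm ⊔ Gy).Reachable p q := fun h => hsep (h.mono h1)
  have hsep2 : ¬ (Gy ⊔ Gc).Reachable p q := fun h => hsep (h.mono h2)
  have hsep3 : ¬ (Gm ⊔ Gc).Reachable p q := fun h => hsep (h.mono h3)
  cases c
  · -- magenta
    rw [if_pos rfl] at hm
    rw [if_neg (by simp)] at hy
    rw [if_neg (by simp)] at hc
    rw [hm, hy, hc]
    have e0 : (Gm ⊔ Gy) ⊔ SimpleGraph.fromEdgeSet {s(p, q)} ⊔ Gc
        = (Gm ⊔ Gy ⊔ Gc) ⊔ SimpleGraph.fromEdgeSet {s(p, q)} := by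
      ext a b; simp only [SimpleGraph.sup_adj]; tauto
    have e1 : Gm ⊔ SimpleGraph.fromEdgeSet {s(p, q)} ⊔ Gy
        = (Gm ⊔ Gy) ⊔ SimpleGraph.fromEdgeSet {s(p, q)} := by
      ext a b; simp only [SimpleGraph.sup_adj]; tauto
    have e3 : Gm ⊔ SimpleGraph.fromEdgeSet {s(p, q)} ⊔ Gc
        = (Gm ⊔ Gc) ⊔ SimpleGraph.fromEdgeSet {s(p, q)} := by
      ext a b; simp only [SimpleGraph.sup_adj]; tauto
    rw [AuxStmt15.sigma_eq, AuxStmt15.sigma_eq]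
    simp only [e1, e3, e0]
    refine AuxStmt15.arith1 ?_ ?_ ?_
    · apply AuxStmt15.card_cc_sup_edge hpq hsep1
    · apply AuxStmt15.card_cc_sup_edge hpq hsep3
    · apply AuxStmt15.card_cc_sup_edge hpq hsep
  · -- yellow
    rw [if_neg (by simp)] at hm
    rw [if_pos rfl] at hy
    rw [if_neg (by simp)] at hc
    rw [hm, hy, hc]
    have e0 : (Gm ⊔ Gy) ⊔ SimpleGraph.fromEdgeSet {s(p, q)} ⊔ Gc
        = (Gm ⊔ Gy ⊔ Gc) ⊔ SimpleGraph.fromEdgeSet {s(p, q)} := by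
      ext a b; simp only [SimpleGraph.sup_adj]; tauto
    have e1 : Gm ⊔ (Gy ⊔ SimpleGraph.fromEdgeSet {s(p, q)})
        = (Gm ⊔ Gy) ⊔ SimpleGraph.fromEdgeSet {s(p, q)} := by
      ext a b; simp only [SimpleGraph.sup_adj]; tauto
    have e2 : Gy ⊔ SimpleGraph.fromEdgeSet {s(p, q)} ⊔ Gc
        = (Gy ⊔ Gc) ⊔ SimpleGraph.fromEdgeSet {s(p, q)} := by
      ext a b; simp only [SimpleGraph.sup_adj]; tauto
    rw [AuxStmt15.sigma_eq, AuxStmt15.sigma_eq]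
    simp only [e1, e2, e0]
    refine AuxStmt15.arith2 ?_ ?_ ?_
    · apply AuxStmt15.card_cc_sup_edge hpq hsep1
    · apply AuxStmt15.card_cc_sup_edge hpq hsep2
    · apply AuxStmt15.card_cc_sup_edge hpq hsep
  · -- cyan
    rw [if_neg (by simp)] at hm
    rw [if_neg (by simp)] at hy
    rw [if_pos rfl] at hc
    rw [hm, hy, hc]
    have e0 : Gm ⊔ Gy ⊔ (Gc ⊔ SimpleGraph.fromEdgeSet {s(p, q)})
        = (Gm ⊔ Gy ⊔ Gc) ⊔ SimpleGraph.fromEdgeSet {s(p, q)} := by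
      ext a b; simp only [SimpleGraph.sup_adj]; tauto
    have e2 : Gy ⊔ (Gc ⊔ SimpleGraph.fromEdgeSet {s(p, q)})
        = (Gy ⊔ Gc) ⊔ SimpleGraph.fromEdgeSet {s(p, q)} := by
      ext a b; simp only [SimpleGraph.sup_adj]; tauto
    have e3 : Gm ⊔ (Gc ⊔ SimpleGraph.fromEdgeSet {s(p, q)})
        = (Gm ⊔ Gc) ⊔ SimpleGraph.fromEdgeSet {s(p, q)} := by
      ext a b; simp only [SimpleGraph.sup_adj]; tauto
    rw [AuxStmt15.sigma_eq, AuxStmt15.sigma_eq]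
    simp only [e2, e3, e0]
    refine AuxStmt15.arith3 ?_ ?_ ?_
    · apply AuxStmt15.card_cc_sup_edge hpq hsep2
    · apply AuxStmt15.card_cc_sup_edge hpq hsep3
    · apply AuxStmt15.card_cc_sup_edge hpq hsep
end

section
/- Let Γ ∈ C_n, and suppose adding an edge e of color magenta between vertices p, q in the same component of Γ creates a cycle that is not monochromatic; specifically: (1) if p, q lie in different components of both Γ_my and Γ_mc, then Σ(Γ ∪ e) = Σ(Γ) - 2; (2) if p, q lie in the same component of exactly one of Γ_my, Γ_mc, then Σ(Γ ∪ e) = Σ(Γ) - 1. -/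
namespace SimpleGraph

variable {V : Type*} {H : SimpleGraph V} {p q u v : V}

theorem reachable_sup_edge_iff :
    (H ⊔ edge p q).Reachable u v ↔
      H.Reachable u v ∨ (H.Reachable u p ∧ H.Reachable q v) ∨
        (H.Reachable u q ∧ H.Reachable p v) := by
  constructor
  · rintro ⟨w⟩
    induction w with
    | nil => exact .inl .rfl
    | cons h _ ih =>
      rw [sup_adj, edge_adj] at h
      rcases h with h | ⟨⟨rfl, rfl⟩ | ⟨rfl, rfl⟩, -⟩
      · have := h.reachable
        grind [Reachable.trans]
      all_goals grind [Reachable.refl, Reachable.symm]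
  · have hle : H ≤ H ⊔ edge p q := le_sup_left
    have hpq : (H ⊔ edge p q).Reachable p q := by
      rcases eq_or_ne p q with rfl | hne
      · rfl
      · exact Adj.reachable (by simp [edge_adj, hne])
    rintro (h | ⟨h₁, h₂⟩ | ⟨h₁, h₂⟩)
    · exact h.mono hle
    · exact ((h₁.mono hle).trans hpq).trans (h₂.mono hle)
    · exact ((h₁.mono hle).trans hpq.symm).trans (h₂.mono hle)

theorem reachable_sup_edge_of_reachable (h : H.Reachable p q) :
    (H ⊔ edge p q).Reachable = H.Reachable := by
  ext u v
  rw [reachable_sup_edge_iff]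
  grind [Reachable.trans, Reachable.symm]

theorem card_connectedComponent_sup_edge_of_reachable (h : H.Reachable p q) :
    Nat.card (H ⊔ edge p q).ConnectedComponent = Nat.card H.ConnectedComponent := by
  rw [ConnectedComponent, ConnectedComponent, reachable_sup_edge_of_reachable h]

theorem card_connectedComponent_sup_edge_add_one [Finite V] (h : ¬H.Reachable p q) :
    Nat.card (H ⊔ edge p q).ConnectedComponent + 1 = Nat.card H.ConnectedComponent := by
  let f : H.ConnectedComponent → (H ⊔ edge p q).ConnectedComponent :=
    ConnectedComponent.map (Hom.ofLE le_sup_left)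
  have hf : ∀ u v, f (H.connectedComponentMk u) = f (H.connectedComponentMk v) ↔
      (H ⊔ edge p q).Reachable u v := fun u v => ConnectedComponent.eq
  -- the only identification made by `f` is that of the components of `p` and `q`
  have hbij : Function.Bijective fun c : ({H.connectedComponentMk q}ᶜ : Set _) => f c := by
    constructor
    · rintro ⟨c, hc⟩ ⟨d, hd⟩ hcd
      induction c using ConnectedComponent.ind
      induction d using ConnectedComponent.ind
      rw [Subtype.mk.injEq, ConnectedComponent.eq]
      rw [hf, reachable_sup_edge_iff] at hcd
      simp only [Set.mem_compl_singleton_iff, ne_eq, ConnectedComponent.eq] at hc hd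
      grind [Reachable.symm]
    · intro c
      induction c using ConnectedComponent.ind with | h v => ?_
      by_cases hv : H.Reachable q v
      · refine ⟨⟨H.connectedComponentMk p, by simpa [ConnectedComponent.eq] using h⟩, ?_⟩
        exact (hf p v).2 (reachable_sup_edge_iff.2 (.inr (.inl ⟨.rfl, hv⟩)))
      · refine ⟨⟨H.connectedComponentMk v, ?_⟩, rfl⟩
        simpa [ConnectedComponent.eq, reachable_comm] using hv
  rw [← Nat.card_eq_of_bijective _ hbij, Nat.card_coe_set_eq, ← Set.ncard_singleton
    (H.connectedComponentMk q), Set.ncard_compl_add_ncard]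

theorem card_connectedComponent_sup_edge_add_ite [Finite V] [Decidable (H.Reachable p q)] :
    Nat.card (H ⊔ edge p q).ConnectedComponent + (if H.Reachable p q then 0 else 1) =
      Nat.card H.ConnectedComponent := by
  split_ifs with h
  · exact card_connectedComponent_sup_edge_of_reachable h
  · exact card_connectedComponent_sup_edge_add_one h

theorem reachable_induce_supp_iff {G : SimpleGraph V} (hle : H ≤ G) {C : G.ConnectedComponent}
    {u v : C.supp} : (H.induce C.supp).Reachable u v ↔ H.Reachable u v := by
  classical
  refine ⟨fun h => h.map (Embedding.induce _).toHom, fun ⟨w⟩ => ⟨w.induce C.supp ?_⟩⟩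
  intro x hx
  exact (ConnectedComponent.sound ((w.takeUntil x hx).reachable.mono hle)).symm.trans u.2

theorem sum_card_connectedComponent_induce_supp [Finite V] {G : SimpleGraph V}
    [Fintype G.ConnectedComponent] (hle : H ≤ G) :
    ∑ C : G.ConnectedComponent, Nat.card (H.induce C.supp).ConnectedComponent =
      Nat.card H.ConnectedComponent := by
  let Φ : (Σ C : G.ConnectedComponent, (H.induce C.supp).ConnectedComponent) →
      H.ConnectedComponent := fun c => c.2.map (Embedding.induce _).toHom
  have hΦ : Function.Bijective Φ := by
    constructor
    · rintro ⟨C, c⟩ ⟨D, d⟩ hcd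
      induction c using ConnectedComponent.ind with | h u => ?_
      induction d using ConnectedComponent.ind with | h v => ?_
      have huv : H.Reachable u v := ConnectedComponent.exact hcd
      obtain rfl : C = D := u.2.symm.trans ((ConnectedComponent.sound (huv.mono hle)).trans v.2)
      exact congrArg _ (ConnectedComponent.sound ((reachable_induce_supp_iff hle).2 huv))
    · intro c
      induction c using ConnectedComponent.ind with | h v => ?_
      exact ⟨⟨G.connectedComponentMk v, (H.induce _).connectedComponentMk ⟨v, rfl⟩⟩, rfl⟩
  rw [← Nat.card_sigma, Nat.card_eq_of_bijective Φ hΦ]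

end SimpleGraph

open SimpleGraph

theorem SigmaFn_add_two_mul_card {V : Type*} [Fintype V] (Gm Gy Gc : SimpleGraph V) :
    SigmaFn Gm Gy Gc + 2 * Nat.card (Gm ⊔ Gy ⊔ Gc).ConnectedComponent =
      Nat.card (Gm ⊔ Gy).ConnectedComponent + Nat.card (Gy ⊔ Gc).ConnectedComponent +
        Nat.card (Gm ⊔ Gc).ConnectedComponent := by
  classical
  set G := Gm ⊔ Gy ⊔ Gc
  let n (H : SimpleGraph V) (C : G.ConnectedComponent) :=
    Nat.card (H.induce C.supp).ConnectedComponent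
  have hpos (H : SimpleGraph V) (C : G.ConnectedComponent) : 1 ≤ n H C := by
    obtain ⟨v, hv⟩ := C.exists_rep
    have : Nonempty (H.induce C.supp).ConnectedComponent :=
      ⟨(H.induce _).connectedComponentMk ⟨v, hv⟩⟩
    exact Nat.card_pos
  have hsum {H : SimpleGraph V} (hle : H ≤ G) : ∑ C, n H C = Nat.card H.ConnectedComponent :=
    sum_card_connectedComponent_induce_supp hle
  calc SigmaFn Gm Gy Gc + 2 * Nat.card G.ConnectedComponent
      = ∑ C, ((n (Gm ⊔ Gy) C + n (Gy ⊔ Gc) C + n (Gm ⊔ Gc) C - 2) + 2) := by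
        simp only [SigmaFn, ← Nat.card_eq_fintype_card, Finset.sum_add_distrib,
          Finset.sum_const, Finset.card_univ, smul_eq_mul, mul_comm]
        rfl
    _ = ∑ C, (n (Gm ⊔ Gy) C + n (Gy ⊔ Gc) C + n (Gm ⊔ Gc) C) := by
        refine Finset.sum_congr rfl fun C _ => ?_
        have := hpos (Gm ⊔ Gy) C
        have := hpos (Gy ⊔ Gc) C
        omega
    _ = _ := by
        rw [Finset.sum_add_distrib, Finset.sum_add_distrib, hsum le_sup_left,
          hsum (sup_le (le_sup_right.trans le_sup_left) le_sup_right),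
          hsum (sup_le_sup_right le_sup_left _)]

theorem stmt_16_general {V : Type*} [Fintype V] (Gm Gy Gc : SimpleGraph V) (p q : V)
    (hsame : (Gm ⊔ Gy ⊔ Gc).Reachable p q)
    (Gm' : SimpleGraph V) (hGm' : Gm' = Gm ⊔ SimpleGraph.fromEdgeSet {s(p, q)}) :
    ((¬ (Gm ⊔ Gy).Reachable p q ∧ ¬ (Gm ⊔ Gc).Reachable p q) →
        SigmaFn Gm' Gy Gc + 2 = SigmaFn Gm Gy Gc) ∧
    ((((Gm ⊔ Gy).Reachable p q ∧ ¬ (Gm ⊔ Gc).Reachable p q) ∨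
      (¬ (Gm ⊔ Gy).Reachable p q ∧ (Gm ⊔ Gc).Reachable p q)) →
        SigmaFn Gm' Gy Gc + 1 = SigmaFn Gm Gy Gc) := by
  classical
  obtain rfl : Gm' = Gm ⊔ edge p q := hGm'
  have hΓ := card_connectedComponent_sup_edge_of_reachable hsame
  have hmy := card_connectedComponent_sup_edge_add_ite (H := Gm ⊔ Gy) (p := p) (q := q)
  have hmc := card_connectedComponent_sup_edge_add_ite (H := Gm ⊔ Gc) (p := p) (q := q)
  have hsig' := SigmaFn_add_two_mul_card (Gm ⊔ edge p q) Gy Gc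
  have hsig := SigmaFn_add_two_mul_card Gm Gy Gc
  rw [sup_right_comm Gm, sup_right_comm (Gm ⊔ Gy), sup_right_comm Gm (edge p q) Gc, hΓ]
    at hsig'
  constructor
  · rintro ⟨h₁, h₂⟩
    simp only [h₁, h₂, if_false] at hmy hmc
    omega
  · rintro (⟨h₁, h₂⟩ | ⟨h₁, h₂⟩) <;> simp only [h₁, h₂, if_true, if_false] at hmy hmc <;> omega

theorem stmt_16 {V : Type*} [Fintype V] (Gm Gy Gc : SimpleGraph V) (p q : V)
    (hpq : p ≠ q) (hadj : ¬ Gm.Adj p q) (hsame : (Gm ⊔ Gy ⊔ Gc).Reachable p q)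
    (Gm' : SimpleGraph V) (hGm' : Gm' = Gm ⊔ SimpleGraph.fromEdgeSet {s(p, q)}) :
    ((¬ (Gm ⊔ Gy).Reachable p q ∧ ¬ (Gm ⊔ Gc).Reachable p q) →
        SigmaFn Gm' Gy Gc + 2 = SigmaFn Gm Gy Gc) ∧
    ((((Gm ⊔ Gy).Reachable p q ∧ ¬ (Gm ⊔ Gc).Reachable p q) ∨
      (¬ (Gm ⊔ Gy).Reachable p q ∧ (Gm ⊔ Gc).Reachable p q)) →
        SigmaFn Gm' Gy Gc + 1 = SigmaFn Gm Gy Gc) :=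
  stmt_16_general Gm Gy Gc p q hsame Gm' hGm'
end
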